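/- arXiv:2509.18389 — 2 statements merged into one kernel-verified Lean document; each statement's English description precedes it below -/
import Mathlib

section
/- For every L ≥ 0 and every probability vector ρ ∈ ℝ^n (entries nonnegative, summing to 1), the expected TD semi-gradient of the looped L-layer Transformer at the TD parameters satisfies the quantitative bound ‖ Σ_{ω=1}^n ρ_ω Σ_{j=1}^n P_{ωj} ( r_ω + γ F_L^{(j)}(A^TD, 0) − F_L^{(ω)}(A^TD, 0) ) g_L(ω) ‖_1 ≤ ‖r‖_∞ γ^L ( ((L² + L)/2) ν + L ξ ), where ν = 2n(n(1+γ)²‖v‖_∞ + (1+γ)²) and ξ = 2n(1+γ). -/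
open Matrix Filter Topology

noncomputable section

/-- Index type for `2n` rows (two stacked copies of the feature dimension). -/
abbrev TwoN (n : ℕ) := Fin n ⊕ Fin n
/-- Row index type for prompts: `2n + 1`. -/
abbrev RIdx (n : ℕ) := TwoN n ⊕ Unit
/-- Column index type for prompts: `n + 1` (context columns plus the query column). -/
abbrev CIdx (n : ℕ) := Fin n ⊕ Unit

/-- The mask `M = [[I_n, 0],[0, 0]]`. -/
def maskM (n : ℕ) : Matrix (CIdx n) (CIdx n) ℝ := Matrix.fromBlocks 1 0 0 0

/-- One linear attention layer `Z ↦ Z + P̃ Z M (Zᵀ Q̃ Z)`. -/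
def attnLayer (n : ℕ) (Pm Qm : Matrix (RIdx n) (RIdx n) ℝ)
    (Z : Matrix (RIdx n) (CIdx n) ℝ) : Matrix (RIdx n) (CIdx n) ℝ :=
  Z + Pm * Z * maskM n * (Zᵀ * Qm * Z)

/-- `P̃ = [[0, 0],[u, 1]]`. -/
def Pmat (n : ℕ) (u : Matrix Unit (TwoN n) ℝ) : Matrix (RIdx n) (RIdx n) ℝ :=
  Matrix.fromBlocks 0 0 u 1

/-- `Q̃ = [[A, 0],[0, 0]]`. -/
def Qmat (n : ℕ) (A : Matrix (TwoN n) (TwoN n) ℝ) : Matrix (RIdx n) (RIdx n) ℝ :=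
  Matrix.fromBlocks A 0 0 0

/-- `A^TD = [[-I, I],[0, 0]]`. -/
def Atd (n : ℕ) : Matrix (TwoN n) (TwoN n) ℝ := Matrix.fromBlocks (-1) 1 0 0

/-- A row-stochastic matrix. -/
def RowStochastic {n : ℕ} (P : Matrix (Fin n) (Fin n) ℝ) : Prop :=
  (∀ i k, 0 ≤ P i k) ∧ ∀ i, ∑ k, P i k = 1

/-- TD iterates `w_0 = 0`, `w_{l+1} = r + γ P w_l`. -/
def tdW {n : ℕ} (γ : ℝ) (P : Matrix (Fin n) (Fin n) ℝ) (r : Fin n → ℝ) : ℕ → Fin n → ℝ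
  | 0 => 0
  | l + 1 => r + γ • P.mulVec (tdW γ P r l)

/-- The value vector `v = (I - γ P)⁻¹ r`. -/
def valueV {n : ℕ} (γ : ℝ) (P : Matrix (Fin n) (Fin n) ℝ) (r : Fin n → ℝ) : Fin n → ℝ :=
  ((1 : Matrix (Fin n) (Fin n) ℝ) - γ • P)⁻¹.mulVec r

/-- The prompt `Z_0(j)`: the `i`-th column is `(e_i, γ Pᵀ e_i, r_i)` and the query
column is `(e_j, 0, 0)`. -/
def prompt {n : ℕ} (γ : ℝ) (P : Matrix (Fin n) (Fin n) ℝ) (r : Fin n → ℝ) (j : Fin n) :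
    Matrix (RIdx n) (CIdx n) ℝ := fun p q =>
  match p, q with
  | Sum.inl (Sum.inl k), Sum.inl i => if k = i then 1 else 0
  | Sum.inl (Sum.inr k), Sum.inl i => γ * P i k
  | Sum.inr _, Sum.inl i => r i
  | Sum.inl (Sum.inl k), Sum.inr _ => if k = j then 1 else 0
  | Sum.inl (Sum.inr _), Sum.inr _ => 0
  | Sum.inr _, Sum.inr _ => 0

/-- Embeddings `Z_l` of the looped transformer with shared parameters `(A, u)`,
starting from the prompt `Z_0(j)`. -/
def embed {n : ℕ} (γ : ℝ) (P : Matrix (Fin n) (Fin n) ℝ) (r : Fin n → ℝ) (j : Fin n)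
    (A : Matrix (TwoN n) (TwoN n) ℝ) (u : Matrix Unit (TwoN n) ℝ) :
    ℕ → Matrix (RIdx n) (CIdx n) ℝ
  | 0 => prompt γ P r j
  | l + 1 => attnLayer n (Pmat n u) (Qmat n A) (embed γ P r j A u l)

/-- Looped `L`-layer transformer output `F_L^{(j)}(A, u) = -(Z_L)_{2n+1, n+1}`. -/
def tfOut {n : ℕ} (γ : ℝ) (P : Matrix (Fin n) (Fin n) ℝ) (r : Fin n → ℝ) (j : Fin n)
    (A : Matrix (TwoN n) (TwoN n) ℝ) (u : Matrix Unit (TwoN n) ℝ) (L : ℕ) : ℝ :=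
  -(embed γ P r j A u L (Sum.inr ()) (Sum.inr ()))

/-- `TF_L(Z_0(j); θ_L^TD)`: the transformer output with the TD parameters. -/
def tfTD {n : ℕ} (γ : ℝ) (P : Matrix (Fin n) (Fin n) ℝ) (r : Fin n → ℝ) (j : Fin n) (L : ℕ) : ℝ :=
  tfOut γ P r j (Atd n) 0 L

/-- `X ∈ ℝ^{2n×n}`: the `i`-th column is `(e_i, γ Pᵀ e_i)`. -/
def Xmat {n : ℕ} (γ : ℝ) (P : Matrix (Fin n) (Fin n) ℝ) : Matrix (TwoN n) (Fin n) ℝ :=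
  fun p i => match p with
  | Sum.inl k => if k = i then 1 else 0
  | Sum.inr k => γ * P i k

/-- The query vector `x^q = (e_ω, 0) ∈ ℝ^{2n}`. -/
def xqv {n : ℕ} (ω : Fin n) : TwoN n → ℝ := fun p =>
  match p with
  | Sum.inl k => if k = ω then 1 else 0
  | Sum.inr _ => 0

/-- Operator norm induced by the ℓ1 vector norm: maximum absolute column sum. -/
def matL1 {m k : Type*} [Fintype m] [Fintype k] (B : Matrix m k ℝ) : ℝ :=
  ⨆ j, ∑ i, |B i j|

/-- `G_0^{(i)} = 0`, `G_{l+1}^{(i)} = X (r - w_l) (X e_i)ᵀ + γ Σ_j P_{ij} G_l^{(j)}`. -/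
def Gseq {n : ℕ} (γ : ℝ) (P : Matrix (Fin n) (Fin n) ℝ) (r : Fin n → ℝ) :
    ℕ → Fin n → Matrix (TwoN n) (TwoN n) ℝ
  | 0 => fun _ => 0
  | l + 1 => fun i =>
      Matrix.vecMulVec ((Xmat γ P).mulVec (r - tdW γ P r l)) ((Xmat γ P).mulVec (Pi.single i 1))
        + γ • ∑ j, P i j • Gseq γ P r l j

/-- `H_0 = 0`, `H_{l+1} = H_l + X (r - w_l) (x^q)ᵀ - G_l^{(ω)}`. -/
def Hseq {n : ℕ} (γ : ℝ) (P : Matrix (Fin n) (Fin n) ℝ) (r : Fin n → ℝ) (ω : Fin n) :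
    ℕ → Matrix (TwoN n) (TwoN n) ℝ
  | 0 => 0
  | l + 1 => Hseq γ P r ω l
      + Matrix.vecMulVec ((Xmat γ P).mulVec (r - tdW γ P r l)) (xqv ω)
      - Gseq γ P r l ω

/-- `U_0 = 0`, `U_{l+1} = X Xᵀ A^TD X + γ U_l Pᵀ`. -/
def Useq {n : ℕ} (γ : ℝ) (P : Matrix (Fin n) (Fin n) ℝ) : ℕ → Matrix (TwoN n) (Fin n) ℝ
  | 0 => 0
  | l + 1 => Xmat γ P * (Xmat γ P)ᵀ * Atd n * Xmat γ P + γ • (Useq γ P l * Pᵀ)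

/-- `h_0 = 0`, `h_{l+1} = h_l + X Xᵀ A^TD x^q + U_l Xᵀ A^TD x^q`. -/
def hseq {n : ℕ} (γ : ℝ) (P : Matrix (Fin n) (Fin n) ℝ) (ω : Fin n) : ℕ → TwoN n → ℝ
  | 0 => 0
  | l + 1 => hseq γ P ω l
      + (Xmat γ P * (Xmat γ P)ᵀ * Atd n).mulVec (xqv ω)
      + (Useq γ P l * (Xmat γ P)ᵀ * Atd n).mulVec (xqv ω)

/-- `g_L(j)`: the vector of all partial derivatives of `F_L^{(j)}` with respect to the
entries of `A` and of `u`, evaluated at the TD parameters `(A^TD, 0)`. -/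
def gvec {n : ℕ} (γ : ℝ) (P : Matrix (Fin n) (Fin n) ℝ) (r : Fin n → ℝ) (L : ℕ) (j : Fin n) :
    (TwoN n × TwoN n) ⊕ TwoN n → ℝ
  | Sum.inl ab => deriv (fun t : ℝ =>
      tfOut γ P r j (Atd n + t • Matrix.single ab.1 ab.2 1) 0 L) 0
  | Sum.inr k => deriv (fun t : ℝ =>
      tfOut γ P r j (Atd n) (t • Matrix.single () k 1) L) 0

/-!
Whatever the parameters, the top `2n` rows of every `Z_l` stay equal to those of the prompt. At the
TD parameters the last row evolves linearly: its context part is `y_l = (γP)^l r` and its query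
entry drops by `y_l(j)` per layer. Hence `F_L^{(j)} = ∑_{l<L} y_l(j)`, and the expected TD error at
`ω` telescopes to `y_L(ω)`, of size at most `γ^L ‖r‖`.

Differentiating the layer recursion along one coordinate of `(A, u)` gives a tangent row
`d_{l+1} = γ P d_l + f_l`; if `‖f_l‖ ≤ K` then `‖d_l‖ ≤ l K`, and if the remaining increments of
the query entry are at most `K'`, its derivative is at most `∑_{l<L} l K + L K'`. Summing over all
coordinates, using `∑_{a,c} |X_{ac}| = n(1+γ)` and `‖r‖ ≤ (1+γ)‖v‖` (from `r = (I - γP) v`), gives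
the estimate.
-/

section Calculus

variable {ι κ : Type*} [Fintype ι] {t : ℝ}

theorem hasDerivAt_add_smul {E : Type*} [NormedAddCommGroup E] [NormedSpace ℝ E] (a b : E) :
    HasDerivAt (fun s : ℝ => a + s • b) b t := by
  simpa using ((hasDerivAt_id t).smul_const b).const_add a

theorem HasDerivAt.dotProduct {v w : ℝ → ι → ℝ} {v' w' : ι → ℝ}
    (hv : HasDerivAt v v' t) (hw : HasDerivAt w w' t) :
    HasDerivAt (fun s => v s ⬝ᵥ w s) (v' ⬝ᵥ w t + v t ⬝ᵥ w') t := by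
  have h := HasDerivAt.fun_sum (u := Finset.univ) fun i _ =>
    (hasDerivAt_pi.1 hv i).mul (hasDerivAt_pi.1 hw i)
  rwa [Finset.sum_add_distrib] at h

theorem HasDerivAt.vecMul {v : ℝ → ι → ℝ} {v' : ι → ℝ} {M : ℝ → Matrix ι κ ℝ}
    {M' : Matrix ι κ ℝ} (hv : HasDerivAt v v' t)
    (hM : ∀ j, HasDerivAt (fun s i => M s i j) (fun i => M' i j) t) :
    HasDerivAt (fun s => v s ᵥ* M s) (v' ᵥ* M t + v t ᵥ* M') t :=
  hasDerivAt_pi.2 fun j => hv.dotProduct (hM j)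

end Calculus

section FiniteSums

variable {ι κ : Type*} [Fintype κ]

theorem norm_le_sum_abs (v : κ → ℝ) : ‖v‖ ≤ ∑ i, |v i| :=
  (pi_norm_le_iff_of_nonneg (Finset.sum_nonneg fun i _ => abs_nonneg (v i))).2 fun i =>
    Finset.single_le_sum (f := fun i => |v i|) (fun i _ => abs_nonneg (v i)) (Finset.mem_univ i)

theorem abs_mulVec_le (M : Matrix ι κ ℝ) (v : κ → ℝ) (i : ι) :
    |(M *ᵥ v) i| ≤ (∑ k, |M i k|) * ‖v‖ := by
  rw [Finset.sum_mul]
  refine (Finset.abs_sum_le_sum_abs _ _).trans (Finset.sum_le_sum fun k _ => ?_)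
  rw [abs_mul]
  exact mul_le_mul_of_nonneg_left (norm_le_pi_norm v k) (abs_nonneg _)

theorem sum_abs_sum_mul_le [Fintype ι] {w a : ι → ℝ} {g : ι → κ → ℝ} {C G : ℝ} (hC : 0 ≤ C)
    (hw0 : ∀ i, 0 ≤ w i) (hw1 : ∑ i, w i = 1) (ha : ∀ i, |a i| ≤ w i * C)
    (hg : ∀ i, ∑ k, |g i k| ≤ G) :
    ∑ k, |∑ i, a i * g i k| ≤ C * G := by
  calc ∑ k, |∑ i, a i * g i k| ≤ ∑ k, ∑ i, |a i| * |g i k| := by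
        gcongr with k; exact (Finset.abs_sum_le_sum_abs _ _).trans_eq (by simp [abs_mul])
    _ = ∑ i, |a i| * ∑ k, |g i k| := by rw [Finset.sum_comm]; simp [Finset.mul_sum]
    _ ≤ ∑ i, w i * C * G := Finset.sum_le_sum fun i _ => mul_le_mul (ha i) (hg i)
          (Finset.sum_nonneg fun _ _ => abs_nonneg _) (mul_nonneg (hw0 i) hC)
    _ = C * G := by rw [← Finset.sum_mul, ← Finset.sum_mul, hw1, one_mul]

theorem two_mul_sum_range_id (L : ℕ) : 2 * ∑ l ∈ Finset.range L, (l : ℝ) = L ^ 2 - L := by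
  induction L with
  | zero => simp
  | succ L ih => rw [Finset.sum_range_succ, mul_add, ih]; push_cast; ring

variable [Fintype ι] [DecidableEq ι] (X : Matrix ι κ ℝ) (a b : ι)

theorem vecMul_transpose_mul_single_mul (v : κ → ℝ) :
    v ᵥ* (Xᵀ * single a b (1 : ℝ) * X) = (X *ᵥ v) a • X b := by
  ext c
  simp [vecMul, dotProduct, mulVec, Matrix.mul_apply, single, ite_and, Finset.sum_mul]
  exact Finset.sum_congr rfl fun _ _ => by ring

theorem dotProduct_transpose_mul_single_mulVec (v : κ → ℝ) (q : ι → ℝ) :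
    v ⬝ᵥ ((Xᵀ * single a b (1 : ℝ)) *ᵥ q) = (X *ᵥ v) a * q b := by
  simp [dotProduct, mulVec, Matrix.mul_apply, single, ite_and, Finset.sum_mul]
  exact Finset.sum_congr rfl fun _ _ => by ring

end FiniteSums

namespace RowStochastic

variable {n : ℕ} {P : Matrix (Fin n) (Fin n) ℝ} {γ : ℝ} (hP : RowStochastic P)
include hP

theorem norm_mulVec_le (v : Fin n → ℝ) : ‖P *ᵥ v‖ ≤ ‖v‖ := by
  refine (pi_norm_le_iff_of_nonneg (norm_nonneg v)).2 fun i => ?_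
  calc ‖(P *ᵥ v) i‖ ≤ (∑ k, |P i k|) * ‖v‖ := abs_mulVec_le P v i
    _ = ‖v‖ := by simp [abs_of_nonneg (hP.1 i _), hP.2 i]

theorem norm_smul_mulVec_le (hγ : 0 ≤ γ) (v : Fin n → ℝ) : ‖γ • P *ᵥ v‖ ≤ γ * ‖v‖ := by
  rw [norm_smul, Real.norm_of_nonneg hγ]
  exact mul_le_mul_of_nonneg_left (hP.norm_mulVec_le v) hγ

theorem norm_le_mul_of_succ_eq (hγ0 : 0 ≤ γ) (hγ1 : γ ≤ 1) {d f : ℕ → Fin n → ℝ} {K : ℝ}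
    (hd0 : d 0 = 0) (hd : ∀ l, d (l + 1) = γ • P *ᵥ d l + f l) (hf : ∀ l, ‖f l‖ ≤ K) (l : ℕ) :
    ‖d l‖ ≤ l * K := by
  induction l with
  | zero => simp [hd0]
  | succ l ih =>
    have hK : 0 ≤ K := (norm_nonneg _).trans (hf 0)
    calc ‖d (l + 1)‖ ≤ γ * ‖d l‖ + K :=
          (hd l ▸ norm_add_le _ _).trans (add_le_add (hP.norm_smul_mulVec_le hγ0 _) (hf l))
      _ ≤ 1 * (l * K) + K := by gcongr
      _ = (l + 1 : ℕ) * K := by push_cast; ring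

theorem abs_le_of_succ_eq (hγ0 : 0 ≤ γ) (hγ1 : γ ≤ 1) {d f : ℕ → Fin n → ℝ} {s h : ℕ → ℝ}
    {K K' : ℝ} (j : Fin n) (hd0 : d 0 = 0) (hd : ∀ l, d (l + 1) = γ • P *ᵥ d l + f l)
    (hf : ∀ l, ‖f l‖ ≤ K) (hs0 : s 0 = 0) (hs : ∀ l, s (l + 1) = s l - d l j + h l)
    (hh : ∀ l, |h l| ≤ K') (L : ℕ) :
    |s L| ≤ (∑ l ∈ Finset.range L, (l : ℝ)) * K + L * K' := by
  have hstep : ∀ l, dist (s l) (s (l + 1)) ≤ l * K + K' := fun l => by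
    rw [Real.dist_eq, hs, show s l - (s l - d l j + h l) = d l j - h l by ring]
    exact (abs_sub _ _).trans (add_le_add ((norm_le_pi_norm (d l) j).trans
      (hP.norm_le_mul_of_succ_eq hγ0 hγ1 hd0 hd hf l)) (hh l))
  have := dist_le_range_sum_of_dist_le L fun {l} _ => hstep l
  rw [hs0, dist_zero_left, Real.norm_eq_abs, Finset.sum_add_distrib, ← Finset.sum_mul] at this
  simpa using this

theorem norm_le_one_add_mul_norm_valueV (hγ0 : 0 ≤ γ) (hγ1 : γ < 1) (r : Fin n → ℝ) :
    ‖r‖ ≤ (1 + γ) * ‖valueV γ P r‖ := by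
  have hB : ∀ v, (1 - γ • P) *ᵥ v = v - γ • P *ᵥ v := fun v => by
    rw [Matrix.sub_mulVec, Matrix.one_mulVec, Matrix.smul_mulVec]
  have hker : ∀ v, (1 - γ • P) *ᵥ v = 0 → v = 0 := fun v hv => by
    rw [hB, sub_eq_zero] at hv
    have : ‖v‖ ≤ γ * ‖v‖ := by
      conv_lhs => rw [hv]
      exact hP.norm_smul_mulVec_le hγ0 v
    exact norm_le_zero_iff.1 (by nlinarith [norm_nonneg v])
  have hunit : IsUnit (1 - γ • P) := Matrix.mulVec_injective_iff_isUnit.1 fun x y hxy =>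
    sub_eq_zero.1 (hker _ (by rw [Matrix.mulVec_sub, hxy, sub_self]))
  have hr : valueV γ P r - γ • P *ᵥ valueV γ P r = r := by
    rw [← hB, valueV, Matrix.mulVec_mulVec,
      Matrix.mul_nonsing_inv _ ((Matrix.isUnit_iff_isUnit_det _).1 hunit), Matrix.one_mulVec]
  calc ‖r‖ = ‖valueV γ P r - γ • P *ᵥ valueV γ P r‖ := by rw [hr]
    _ ≤ ‖valueV γ P r‖ + ‖γ • P *ᵥ valueV γ P r‖ := norm_sub_le _ _
    _ ≤ ‖valueV γ P r‖ + γ * ‖valueV γ P r‖ := by grw [hP.norm_smul_mulVec_le hγ0]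
    _ = (1 + γ) * ‖valueV γ P r‖ := by ring

end RowStochastic

section LoopedAttention

variable {m c : Type*} [Fintype m] [Fintype c]

/- A layer with `P̃ = [[0, 0], [u, 1]]` and `Q̃ = [[A, 0], [0, 0]]` keeps the top block `[X | q]`
of the embedding and changes only its last row `[y | s]`; `ctxRow` and `queryVal` are `y` and `s`
after `l` layers. -/
def ctxRow (X : Matrix m c ℝ) (A : Matrix m m ℝ) (u : m → ℝ) (r : c → ℝ) : ℕ → c → ℝ
  | 0 => r
  | l + 1 => ctxRow X A u r l + (u ᵥ* X + ctxRow X A u r l) ᵥ* (Xᵀ * A * X)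

def queryVal (X : Matrix m c ℝ) (q : m → ℝ) (A : Matrix m m ℝ) (u : m → ℝ) (r : c → ℝ) :
    ℕ → ℝ
  | 0 => 0
  | l + 1 => queryVal X q A u r l + (u ᵥ* X + ctxRow X A u r l) ⬝ᵥ ((Xᵀ * A) *ᵥ q)

def ctxRowDeriv (X : Matrix m c ℝ) (A : Matrix m m ℝ) (u : m → ℝ) (r : c → ℝ)
    (E : Matrix m m ℝ) (e : m → ℝ) : ℕ → c → ℝ
  | 0 => 0
  | l + 1 => ctxRowDeriv X A u r E e l
      + (e ᵥ* X + ctxRowDeriv X A u r E e l) ᵥ* (Xᵀ * A * X)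
      + (u ᵥ* X + ctxRow X A u r l) ᵥ* (Xᵀ * E * X)

def queryValDeriv (X : Matrix m c ℝ) (q : m → ℝ) (A : Matrix m m ℝ) (u : m → ℝ) (r : c → ℝ)
    (E : Matrix m m ℝ) (e : m → ℝ) : ℕ → ℝ
  | 0 => 0
  | l + 1 => queryValDeriv X q A u r E e l
      + (e ᵥ* X + ctxRowDeriv X A u r E e l) ⬝ᵥ ((Xᵀ * A) *ᵥ q)
      + (u ᵥ* X + ctxRow X A u r l) ⬝ᵥ ((Xᵀ * E) *ᵥ q)

variable (X : Matrix m c ℝ) (q : m → ℝ) (A E : Matrix m m ℝ) (u e : m → ℝ) (r : c → ℝ)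

theorem hasDerivAt_add_smul_vecMul :
    HasDerivAt (fun t : ℝ => (u + t • e) ᵥ* X) (e ᵥ* X) 0 := by
  simp only [Matrix.add_vecMul, Matrix.smul_vecMul]
  exact hasDerivAt_add_smul _ _

theorem hasDerivAt_ctxRow (l : ℕ) :
    HasDerivAt (fun t : ℝ => ctxRow X (A + t • E) (u + t • e) r l)
      (ctxRowDeriv X A u r E e l) 0 := by
  induction l with
  | zero => exact hasDerivAt_const 0 r
  | succ l ih =>
    have hw := (hasDerivAt_add_smul_vecMul X u e).add ih
    have hM : ∀ j, HasDerivAt (fun t : ℝ => fun i => (Xᵀ * (A + t • E) * X) i j)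
        (fun i => (Xᵀ * E * X) i j) 0 := fun j => by
      have hlin : (fun t : ℝ => fun i => (Xᵀ * (A + t • E) * X) i j)
          = fun t : ℝ => (fun i => (Xᵀ * A * X) i j) + t • fun i => (Xᵀ * E * X) i j := by
        ext t i; simp [Matrix.mul_add, Matrix.add_mul]
      rw [hlin]; exact hasDerivAt_add_smul _ _
    refine (ih.add (hw.vecMul hM)).congr_deriv ?_
    simp [ctxRowDeriv, add_assoc]

theorem hasDerivAt_queryVal (l : ℕ) :
    HasDerivAt (fun t : ℝ => queryVal X q (A + t • E) (u + t • e) r l)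
      (queryValDeriv X q A u r E e l) 0 := by
  induction l with
  | zero => exact hasDerivAt_const 0 0
  | succ l ih =>
    have hw := (hasDerivAt_add_smul_vecMul X u e).add (hasDerivAt_ctxRow X A E u e r l)
    have hv : HasDerivAt (fun t : ℝ => (Xᵀ * (A + t • E)) *ᵥ q) ((Xᵀ * E) *ᵥ q) 0 := by
      have hlin : (fun t : ℝ => (Xᵀ * (A + t • E)) *ᵥ q)
          = fun t : ℝ => (Xᵀ * A) *ᵥ q + t • (Xᵀ * E) *ᵥ q := by
        ext t i; simp [Matrix.mul_add, Matrix.add_mulVec, Matrix.smul_mulVec]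
      rw [hlin]; exact hasDerivAt_add_smul _ _
    refine (ih.add (hw.dotProduct hv)).congr_deriv ?_
    simp [queryValDeriv, add_assoc]

end LoopedAttention

section Transformer

variable {n : ℕ} (γ : ℝ) (P : Matrix (Fin n) (Fin n) ℝ) (r : Fin n → ℝ) (j : Fin n)
  (A : Matrix (TwoN n) (TwoN n) ℝ) (u : Matrix Unit (TwoN n) ℝ)

theorem attnLayer_fromBlocks (X : Matrix (TwoN n) (Fin n) ℝ) (q : Matrix (TwoN n) Unit ℝ)
    (y : Matrix Unit (Fin n) ℝ) (s : Matrix Unit Unit ℝ) :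
    attnLayer n (Pmat n u) (Qmat n A) (fromBlocks X q y s) =
      fromBlocks X q (y + (u * X + y) * (Xᵀ * A * X)) (s + (u * X + y) * (Xᵀ * A * q)) := by
  simp [attnLayer, Pmat, Qmat, maskM, fromBlocks_transpose, fromBlocks_multiply,
    fromBlocks_add, Matrix.mul_assoc]

theorem prompt_eq_fromBlocks :
    prompt γ P r j = fromBlocks (Xmat γ P) (replicateCol Unit (xqv j)) (replicateRow Unit r) 0 := by
  ext (((k | k) | _) | i) (i | _) <;> rfl

theorem embed_eq_fromBlocks (l : ℕ) :
    embed γ P r j A u l = fromBlocks (Xmat γ P) (replicateCol Unit (xqv j))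
      (replicateRow Unit (ctxRow (Xmat γ P) A (u ()) r l))
      (of fun _ _ => queryVal (Xmat γ P) (xqv j) A (u ()) r l) := by
  induction l with
  | zero => rw [embed, prompt_eq_fromBlocks]; rfl
  | succ l ih => rw [embed, ih, attnLayer_fromBlocks]; rfl

theorem tfOut_eq_neg_queryVal (L : ℕ) :
    tfOut γ P r j A u L = -queryVal (Xmat γ P) (xqv j) A (u ()) r L := by
  rw [tfOut, embed_eq_fromBlocks]; rfl

end Transformer

section TDParameters

variable {n : ℕ} (γ : ℝ) (P : Matrix (Fin n) (Fin n) ℝ) (r : Fin n → ℝ)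

theorem Xmat_eq_fromRows : Xmat γ P = fromRows 1 (γ • Pᵀ) := by
  ext (k | k) i <;> simp [Xmat, one_apply]

theorem xqv_eq_sumElim (j : Fin n) : xqv j = Sum.elim (Pi.single j 1) 0 := by
  ext (k | k) <;> simp [xqv, Pi.single_apply]

theorem transpose_Xmat_mul_Atd : (Xmat γ P)ᵀ * Atd n = fromCols (-1) 1 := by
  simp [Xmat_eq_fromRows, transpose_fromRows, Atd, fromCols_mul_fromBlocks]

theorem vecMul_Xmat_Atd_Xmat (v : Fin n → ℝ) :
    v ᵥ* ((Xmat γ P)ᵀ * Atd n * Xmat γ P) = γ • P *ᵥ v - v := by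
  rw [transpose_Xmat_mul_Atd, Xmat_eq_fromRows, fromCols_mul_fromRows, Matrix.neg_mul,
    Matrix.one_mul, Matrix.one_mul, Matrix.vecMul_add, Matrix.vecMul_neg, Matrix.vecMul_one,
    Matrix.vecMul_smul, Matrix.vecMul_transpose]
  abel

theorem dotProduct_Xmat_Atd_xqv (v : Fin n → ℝ) (j : Fin n) :
    v ⬝ᵥ (((Xmat γ P)ᵀ * Atd n) *ᵥ xqv j) = -v j := by
  rw [transpose_Xmat_mul_Atd, xqv_eq_sumElim, fromCols_mulVec_sumElim, Matrix.neg_mulVec,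
    Matrix.one_mulVec, Matrix.mulVec_zero, add_zero, dotProduct_neg, dotProduct_single, mul_one]

theorem ctxRow_Atd_succ (l : ℕ) :
    ctxRow (Xmat γ P) (Atd n) 0 r (l + 1) = γ • P *ᵥ ctxRow (Xmat γ P) (Atd n) 0 r l := by
  rw [ctxRow, zero_vecMul, zero_add, vecMul_Xmat_Atd_Xmat, add_sub_cancel]

theorem queryVal_Atd_succ (j : Fin n) (l : ℕ) :
    queryVal (Xmat γ P) (xqv j) (Atd n) 0 r (l + 1)
      = queryVal (Xmat γ P) (xqv j) (Atd n) 0 r l - ctxRow (Xmat γ P) (Atd n) 0 r l j := by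
  rw [queryVal, zero_vecMul, zero_add, dotProduct_Xmat_Atd_xqv, sub_eq_add_neg]

theorem tfTD_eq_sum (j : Fin n) (L : ℕ) :
    tfTD γ P r j L = ∑ l ∈ Finset.range L, ctxRow (Xmat γ P) (Atd n) 0 r l j := by
  rw [tfTD, tfOut_eq_neg_queryVal, show (0 : Matrix Unit (TwoN n) ℝ) () = 0 from rfl]
  induction L with
  | zero => simp [queryVal]
  | succ L ih => rw [queryVal_Atd_succ, Finset.sum_range_succ, ← ih]; ring

theorem ctxRowDeriv_Atd_succ (E : Matrix (TwoN n) (TwoN n) ℝ) (e : TwoN n → ℝ) (l : ℕ) :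
    ctxRowDeriv (Xmat γ P) (Atd n) 0 r E e (l + 1)
      = γ • P *ᵥ ctxRowDeriv (Xmat γ P) (Atd n) 0 r E e l
        + (γ • P *ᵥ (e ᵥ* Xmat γ P) - e ᵥ* Xmat γ P
          + ctxRow (Xmat γ P) (Atd n) 0 r l ᵥ* ((Xmat γ P)ᵀ * E * Xmat γ P)) := by
  rw [ctxRowDeriv, zero_vecMul, zero_add, vecMul_Xmat_Atd_Xmat, Matrix.mulVec_add, smul_add]
  abel

theorem queryValDeriv_Atd_succ (j : Fin n) (E : Matrix (TwoN n) (TwoN n) ℝ) (e : TwoN n → ℝ)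
    (l : ℕ) :
    queryValDeriv (Xmat γ P) (xqv j) (Atd n) 0 r E e (l + 1)
      = queryValDeriv (Xmat γ P) (xqv j) (Atd n) 0 r E e l
        - ctxRowDeriv (Xmat γ P) (Atd n) 0 r E e l j
        + (-(e ᵥ* Xmat γ P) j
          + ctxRow (Xmat γ P) (Atd n) 0 r l ⬝ᵥ (((Xmat γ P)ᵀ * E) *ᵥ xqv j)) := by
  rw [queryValDeriv, zero_vecMul, zero_add, dotProduct_Xmat_Atd_xqv, Pi.add_apply]
  ring

variable {γ P}

theorem RowStochastic.norm_ctxRow_Atd_le (hP : RowStochastic P) (hγ : 0 ≤ γ) (l : ℕ) :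
    ‖ctxRow (Xmat γ P) (Atd n) 0 r l‖ ≤ γ ^ l * ‖r‖ := by
  induction l with
  | zero => simp [ctxRow]
  | succ l ih =>
    rw [ctxRow_Atd_succ, pow_succ', mul_assoc]
    exact (hP.norm_smul_mulVec_le hγ _).trans (mul_le_mul_of_nonneg_left ih hγ)

theorem RowStochastic.tdError_eq (hP : RowStochastic P) (L : ℕ) (ω : Fin n) :
    ∑ j, P ω j * (r ω + γ * tfTD γ P r j L - tfTD γ P r ω L)
      = ctxRow (Xmat γ P) (Atd n) 0 r L ω := by
  set y := ctxRow (Xmat γ P) (Atd n) 0 r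
  have hPy : γ * ∑ j, P ω j * tfTD γ P r j L = ∑ l ∈ Finset.range L, y (l + 1) ω := by
    simp only [tfTD_eq_sum, Finset.mul_sum, ctxRow_Atd_succ, y]
    rw [Finset.sum_comm]
    simp [mulVec, dotProduct, Finset.mul_sum]
  have htel := Finset.sum_range_sub (fun l => y l ω) L
  rw [Finset.sum_sub_distrib] at htel
  calc ∑ j, P ω j * (r ω + γ * tfTD γ P r j L - tfTD γ P r ω L)
      = r ω + γ * ∑ j, P ω j * tfTD γ P r j L - tfTD γ P r ω L := by
        simp only [mul_sub, mul_add, Finset.sum_sub_distrib, Finset.sum_add_distrib,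
          ← Finset.sum_mul, hP.2 ω, one_mul, Finset.mul_sum, mul_left_comm γ]
    _ = y L ω := by rw [hPy, tfTD_eq_sum]; simp only [y, ctxRow] at htel ⊢; linarith

theorem RowStochastic.sum_abs_Xmat (hP : RowStochastic P) (hγ : 0 ≤ γ) :
    ∑ a, ∑ c, |Xmat γ P a c| = n * (1 + γ) := by
  have hcol : ∑ k, ∑ c, P c k = n := by rw [Finset.sum_comm]; simp [hP.2]
  simp only [Fintype.sum_sum_type, Xmat, abs_mul, abs_of_nonneg hγ, abs_of_nonneg (hP.1 _ _),
    ← Finset.mul_sum, hcol]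
  simp [apply_ite]
  ring

end TDParameters

section Gradient

variable {n : ℕ} {γ : ℝ} {P : Matrix (Fin n) (Fin n) ℝ} {r : Fin n → ℝ}

theorem gvec_inl (L : ℕ) (j : Fin n) (a b : TwoN n) :
    gvec γ P r L j (Sum.inl (a, b))
      = -queryValDeriv (Xmat γ P) (xqv j) (Atd n) 0 r (single a b 1) 0 L := by
  have hfun : (fun t : ℝ => tfOut γ P r j (Atd n + t • single a b 1) 0 L)
      = fun t : ℝ => -queryVal (Xmat γ P) (xqv j) (Atd n + t • single a b 1) (0 + t • 0) r L := by
    ext t; simp [tfOut_eq_neg_queryVal, show (0 : Matrix Unit (TwoN n) ℝ) () = 0 from rfl]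
  rw [gvec, hfun]
  exact (hasDerivAt_queryVal _ _ _ _ _ _ _ L).neg.deriv

theorem gvec_inr (L : ℕ) (j : Fin n) (k : TwoN n) :
    gvec γ P r L j (Sum.inr k)
      = -queryValDeriv (Xmat γ P) (xqv j) (Atd n) 0 r 0 (Pi.single k 1) L := by
  have hfun : (fun t : ℝ => tfOut γ P r j (Atd n) (t • single () k 1) L)
      = fun t : ℝ => -queryVal (Xmat γ P) (xqv j) (Atd n + t • 0) (0 + t • Pi.single k 1) r L := by
    ext t
    rw [tfOut_eq_neg_queryVal, smul_zero, add_zero, zero_add]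
    congr
    ext k'
    simp [single, Pi.single_apply, eq_comm]
  rw [gvec, hfun]
  exact (hasDerivAt_queryVal _ _ _ _ _ _ _ L).neg.deriv

variable (hP : RowStochastic P) (hγ0 : 0 ≤ γ) (hγ1 : γ ≤ 1)
include hP hγ0 hγ1

theorem abs_gvec_inl_le (L : ℕ) (ω : Fin n) (a b : TwoN n) :
    |gvec γ P r L ω (Sum.inl (a, b))|
      ≤ (∑ l ∈ Finset.range L, (l : ℝ)) * ((∑ c, |Xmat γ P a c|) * ‖r‖ * ∑ c, |Xmat γ P b c|)
        + L * ((∑ c, |Xmat γ P a c|) * ‖r‖ * xqv ω b) := by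
  have hxq : 0 ≤ xqv ω b := by
    rw [xqv_eq_sumElim]; rcases b with k | k <;> simp [Pi.single_apply, apply_ite]
  have hXy : ∀ l, |(Xmat γ P *ᵥ ctxRow (Xmat γ P) (Atd n) 0 r l) a|
      ≤ (∑ c, |Xmat γ P a c|) * ‖r‖ := fun l =>
    (abs_mulVec_le _ _ a).trans <| mul_le_mul_of_nonneg_left
      ((hP.norm_ctxRow_Atd_le r hγ0 l).trans
        (mul_le_of_le_one_left (norm_nonneg r) (pow_le_one₀ hγ0 hγ1)))
      (Finset.sum_nonneg fun _ _ => abs_nonneg _)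
  rw [gvec_inl, abs_neg]
  refine hP.abs_le_of_succ_eq hγ0 hγ1 ω rfl (ctxRowDeriv_Atd_succ γ P r _ _) (fun l => ?_) rfl
    (queryValDeriv_Atd_succ γ P r ω _ _) (fun l => ?_) L
  · simp only [zero_vecMul, Matrix.mulVec_zero, smul_zero, sub_zero, zero_add,
      vecMul_transpose_mul_single_mul, norm_smul, Real.norm_eq_abs]
    exact mul_le_mul (hXy l) (norm_le_sum_abs _) (norm_nonneg _)
      (mul_nonneg (Finset.sum_nonneg fun _ _ => abs_nonneg _) (norm_nonneg r))
  · simp only [zero_vecMul, Pi.zero_apply, neg_zero, zero_add,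
      dotProduct_transpose_mul_single_mulVec, abs_mul, abs_of_nonneg hxq]
    exact mul_le_mul_of_nonneg_right (hXy l) hxq

theorem abs_gvec_inr_le (L : ℕ) (ω : Fin n) (k : TwoN n) :
    |gvec γ P r L ω (Sum.inr k)|
      ≤ (∑ l ∈ Finset.range L, (l : ℝ)) * ((1 + γ) * ∑ c, |Xmat γ P k c|)
        + L * ∑ c, |Xmat γ P k c| := by
  rw [gvec_inr, abs_neg]
  refine hP.abs_le_of_succ_eq hγ0 hγ1 ω rfl (ctxRowDeriv_Atd_succ γ P r _ _) (fun l => ?_) rfl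
    (queryValDeriv_Atd_succ γ P r ω _ _) (fun l => ?_) L
  · simp only [single_one_vecMul, Matrix.mul_zero, Matrix.zero_mul, vecMul_zero, add_zero]
    calc ‖γ • P *ᵥ (Xmat γ P).row k - (Xmat γ P).row k‖
        ≤ ‖γ • P *ᵥ (Xmat γ P).row k‖ + ‖(Xmat γ P).row k‖ := norm_sub_le _ _
      _ ≤ γ * ‖(Xmat γ P).row k‖ + ‖(Xmat γ P).row k‖ := by
          grw [hP.norm_smul_mulVec_le hγ0]
      _ = (1 + γ) * ‖(Xmat γ P).row k‖ := by ring
      _ ≤ (1 + γ) * ∑ c, |Xmat γ P k c| :=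
          mul_le_mul_of_nonneg_left (norm_le_sum_abs _) (by linarith)
  · simp only [single_one_vecMul, Matrix.mul_zero, Matrix.zero_mulVec, dotProduct_zero,
      add_zero, abs_neg]
    exact (norm_le_pi_norm ((Xmat γ P).row k) ω).trans (norm_le_sum_abs _)

theorem sum_abs_gvec_le (L : ℕ) (ω : Fin n) :
    ∑ idx, |gvec γ P r L ω idx|
      ≤ (∑ l ∈ Finset.range L, (l : ℝ)) * (‖r‖ * (n * (1 + γ)) ^ 2 + (1 + γ) * (n * (1 + γ)))
        + L * ((‖r‖ + 1) * (n * (1 + γ))) := by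
  have hX := hP.sum_abs_Xmat hγ0
  have hxq : ∑ b, xqv ω b = 1 := by simp [xqv_eq_sumElim]
  rw [Fintype.sum_sum_type, Fintype.sum_prod_type]
  calc ∑ a, ∑ b, |gvec γ P r L ω (Sum.inl (a, b))| + ∑ k, |gvec γ P r L ω (Sum.inr k)|
      ≤ ∑ a, ∑ b, ((∑ l ∈ Finset.range L, (l : ℝ))
            * ((∑ c, |Xmat γ P a c|) * ‖r‖ * ∑ c, |Xmat γ P b c|)
          + L * ((∑ c, |Xmat γ P a c|) * ‖r‖ * xqv ω b))
        + ∑ k, ((∑ l ∈ Finset.range L, (l : ℝ)) * ((1 + γ) * ∑ c, |Xmat γ P k c|)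
          + L * ∑ c, |Xmat γ P k c|) := by
        gcongr with a _ b _ k
        · exact abs_gvec_inl_le hP hγ0 hγ1 L ω a b
        · exact abs_gvec_inr_le hP hγ0 hγ1 L ω k
    _ = _ := by
        simp only [Finset.sum_add_distrib, ← Finset.mul_sum, ← Finset.sum_mul, hX, hxq]
        ring

end Gradient

theorem gradient_constant_le {γ R V : ℝ} (n L : ℕ) (hγ0 : 0 ≤ γ) (hγ1 : γ ≤ 1) (hR : 0 ≤ R)
    (hRV : R ≤ (1 + γ) * V) :
    (∑ l ∈ Finset.range L, (l : ℝ)) * (R * (n * (1 + γ)) ^ 2 + (1 + γ) * (n * (1 + γ)))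
        + L * ((R + 1) * (n * (1 + γ)))
      ≤ ((L ^ 2 + L) / 2) * (2 * n * (n * (1 + γ) ^ 2 * V + (1 + γ) ^ 2))
        + L * (2 * n * (1 + γ)) := by
  have hS : ∑ l ∈ Finset.range L, (l : ℝ) = (L ^ 2 - L) / 2 := by
    linarith [two_mul_sum_range_id L]
  have hL : (0 : ℝ) ≤ L := L.cast_nonneg
  have hn : (n : ℝ) ≤ n ^ 2 := by exact_mod_cast Nat.le_self_pow two_ne_zero n
  have hV : 0 ≤ V := by nlinarith
  have hN : 0 ≤ (n : ℝ) * (1 + γ) := by positivity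
  have hR2 : R * (n * (1 + γ)) ^ 2 ≤ 2 * V * (n * (1 + γ)) ^ 2 :=
    mul_le_mul_of_nonneg_right (by nlinarith) (sq_nonneg _)
  have hRL : R * (n * (1 + γ)) ≤ V * (n * (1 + γ)) ^ 2 := by
    calc R * (n * (1 + γ)) ≤ (1 + γ) * V * (n * (1 + γ)) := by gcongr
      _ = V * n * (1 + γ) ^ 2 := by ring
      _ ≤ V * n ^ 2 * (1 + γ) ^ 2 := by gcongr
      _ = V * (n * (1 + γ)) ^ 2 := by ring
  rw [hS]
  have hLS : (0 : ℝ) ≤ (L ^ 2 - L) / 2 := by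
    nlinarith [show (L : ℝ) ≤ L ^ 2 by exact_mod_cast Nat.le_self_pow two_ne_zero L]
  nlinarith [mul_le_mul_of_nonneg_left hR2 hLS, mul_le_mul_of_nonneg_left hRL hL,
    mul_nonneg (mul_nonneg hL hV) (sq_nonneg ((n : ℝ) * (1 + γ))), mul_nonneg hL hN,
    mul_nonneg (add_nonneg hLS hL) (mul_nonneg hN (by linarith : (0 : ℝ) ≤ 1 + γ))]

theorem stmt16_general (n : ℕ) (γ : ℝ) (hγ0 : 0 ≤ γ) (hγ1 : γ < 1)
    (P : Matrix (Fin n) (Fin n) ℝ) (hP : RowStochastic P) (r : Fin n → ℝ)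
    (L : ℕ) (ρ : Fin n → ℝ) (hρ0 : ∀ ω, 0 ≤ ρ ω) (hρ1 : ∑ ω, ρ ω = 1) :
    ∑ idx : (TwoN n × TwoN n) ⊕ TwoN n,
        |∑ ω, (ρ ω * ∑ j, P ω j * (r ω + γ * tfTD γ P r j L - tfTD γ P r ω L)) *
          gvec γ P r L ω idx|
      ≤ ‖r‖ * γ ^ L *
          ((((L : ℝ) ^ 2 + L) / 2) *
              (2 * (n : ℝ) * ((n : ℝ) * (1 + γ) ^ 2 * ‖valueV γ P r‖ + (1 + γ) ^ 2))
            + (L : ℝ) * (2 * (n : ℝ) * (1 + γ))) := by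
  have hTDerror : ∀ ω, |ρ ω * ∑ j, P ω j * (r ω + γ * tfTD γ P r j L - tfTD γ P r ω L)|
      ≤ ρ ω * (γ ^ L * ‖r‖) := fun ω => by
    rw [abs_mul, abs_of_nonneg (hρ0 ω), hP.tdError_eq]
    exact mul_le_mul_of_nonneg_left
      ((norm_le_pi_norm _ ω).trans (hP.norm_ctxRow_Atd_le r hγ0 L)) (hρ0 ω)
  calc _ ≤ γ ^ L * ‖r‖ * _ :=
        sum_abs_sum_mul_le (by positivity) hρ0 hρ1 hTDerror (sum_abs_gvec_le hP hγ0 hγ1.le L)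
    _ ≤ _ := by
        rw [mul_comm (γ ^ L)]
        exact mul_le_mul_of_nonneg_left (gradient_constant_le n L hγ0 hγ1.le (norm_nonneg r)
          (hP.norm_le_one_add_mul_norm_valueV hγ0 hγ1 r)) (by positivity)

/-- quantitative bound on the expected TD semi-gradient of the looped
L-layer transformer at the TD parameters. -/
theorem stmt16 (n : ℕ) (hn : 1 ≤ n) (γ : ℝ) (hγ0 : 0 ≤ γ) (hγ1 : γ < 1)
    (P : Matrix (Fin n) (Fin n) ℝ) (hP : RowStochastic P) (r : Fin n → ℝ)
    (L : ℕ) (ρ : Fin n → ℝ) (hρ0 : ∀ ω, 0 ≤ ρ ω) (hρ1 : ∑ ω, ρ ω = 1) :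
    ∑ idx : (TwoN n × TwoN n) ⊕ TwoN n,
        |∑ ω, (ρ ω * ∑ j, P ω j * (r ω + γ * tfTD γ P r j L - tfTD γ P r ω L)) *
          gvec γ P r L ω idx|
      ≤ ‖r‖ * γ ^ L *
          ((((L : ℝ) ^ 2 + L) / 2) *
              (2 * (n : ℝ) * ((n : ℝ) * (1 + γ) ^ 2 * ‖valueV γ P r‖ + (1 + γ) ^ 2))
            + (L : ℝ) * (2 * (n : ℝ) * (1 + γ))) :=
  stmt16_general n γ hγ0 hγ1 P hP r L ρ hρ0 hρ1

end
end

section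
/- (Corollary 1) lim_{L→∞} J'(θ_L^TD) = 0, where J'(θ_L^TD) = ‖Δ_L^MC‖_1 is the ℓ1 norm of the expected multi-task Monte Carlo update Δ_L^MC = E_{(P,r)∼μ}[ Σ_{ω=1}^n ρ_P(ω) ( v_ω − F_L^{(ω)}(A^TD, 0) ) g_L(ω) ] of the looped Transformer evaluated at the TD parameters, with v_ω (the ω-th entry of the value vector v = (I_n − γP)^{-1} r) equal to the expected Monte Carlo return from state ω; i.e., the TD parameters are a global minimizer of the Monte Carlo norm-of-expected-update pretraining loss in the limit of infinitely many layers. -/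
/-!
Since the top block row of `P̃` vanishes, every layer leaves the top `2n` rows of the prompt
unchanged and only the bottom row evolves. At the TD parameters one layer maps the context part
`x` of that row to `γ P x` and subtracts `x_j` from its query entry, so the output after `L`
layers is the TD iterate `w_L`, which is `γ^L ‖r‖ / (1 - γ)`-close to `v`. Differentiating the
bottom-row recursion along one parameter direction gives the same TD recursion plus a bounded
forcing term; its context part stays bounded because `γ P` is a contraction, so its query entry
grows at most linearly in `L`. Hence every partial derivative is `O(L)` uniformly on the support
of `μ`, and the expected Monte Carlo update is `O(L γ^L)`.
-/

open Matrix Filter Topology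

noncomputable section

/-- The product σ-algebra on matrices, via the identification with the Pi type. -/
instance matrixMeasurableSpace {m k α : Type*} [MeasurableSpace α] :
    MeasurableSpace (Matrix m k α) :=
  inferInstanceAs (MeasurableSpace (m → k → α))

section RowStochastic

variable {n : ℕ} {γ : ℝ} {P : Matrix (Fin n) (Fin n) ℝ}

theorem RowStochastic.le_one (hP : RowStochastic P) (i k : Fin n) : P i k ≤ 1 :=
  hP.2 i ▸ Finset.single_le_sum (fun k _ => hP.1 i k) (Finset.mem_univ k)

theorem RowStochastic.norm_mulVec_le_s19 (hP : RowStochastic P) (x : Fin n → ℝ) :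
    ‖P *ᵥ x‖ ≤ ‖x‖ := by
  refine (pi_norm_le_iff_of_nonneg (norm_nonneg x)).2 fun i => ?_
  calc ‖(P *ᵥ x) i‖ ≤ ∑ k, P i k * ‖x‖ := by
        rw [mulVec, dotProduct]
        refine (norm_sum_le _ _).trans (Finset.sum_le_sum fun k _ => ?_)
        rw [norm_mul, Real.norm_of_nonneg (hP.1 i k)]
        exact mul_le_mul_of_nonneg_left (norm_le_pi_norm x k) (hP.1 i k)
    _ = ‖x‖ := by rw [← Finset.sum_mul, hP.2 i, one_mul]

theorem RowStochastic.norm_smul_mulVec_le_s19 (hP : RowStochastic P) (hγ : 0 ≤ γ)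
    (x : Fin n → ℝ) : ‖γ • P *ᵥ x‖ ≤ γ * ‖x‖ := by
  rw [norm_smul, Real.norm_of_nonneg hγ]
  exact mul_le_mul_of_nonneg_left (hP.norm_mulVec_le_s19 x) hγ

theorem RowStochastic.eq_zero_of_eq_smul_mulVec (hP : RowStochastic P) (hγ0 : 0 ≤ γ)
    (hγ1 : γ < 1) {x : Fin n → ℝ} (hx : x = γ • P *ᵥ x) : x = 0 := by
  have h : ‖x‖ ≤ γ * ‖x‖ := by
    conv_lhs => rw [hx]
    exact hP.norm_smul_mulVec_le_s19 hγ0 x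
  exact norm_le_zero_iff.1 (by nlinarith [norm_nonneg x])

theorem RowStochastic.isUnit_one_sub_smul (hP : RowStochastic P) (hγ0 : 0 ≤ γ)
    (hγ1 : γ < 1) : IsUnit (1 - γ • P) := by
  rw [← mulVec_injective_iff_isUnit]
  intro x y hxy
  refine sub_eq_zero.1 (hP.eq_zero_of_eq_smul_mulVec hγ0 hγ1 ?_)
  simp only [sub_mulVec, one_mulVec, smul_mulVec] at hxy
  rw [mulVec_sub, smul_sub]
  linear_combination hxy

end RowStochastic

namespace LoopedTD

section EntrywiseDeriv

variable {m k p : Type*} [Fintype k]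

/-- Matrices carry no global norm, so derivatives of matrix-valued paths are taken entrywise. -/
def HasEntrywiseDerivAt (X : ℝ → Matrix m p ℝ) (X' : Matrix m p ℝ) (t : ℝ) : Prop :=
  ∀ i c, HasDerivAt (fun s => X s i c) (X' i c) t

theorem hasEntrywiseDerivAt_add_smul (A E : Matrix m p ℝ) (t : ℝ) :
    HasEntrywiseDerivAt (fun s => A + s • E) E t := fun i c => by
  simpa using ((hasDerivAt_id t).mul_const (E i c)).const_add (A i c)

variable {t : ℝ}

theorem HasEntrywiseDerivAt.add {X Y : ℝ → Matrix m p ℝ} {X' Y' : Matrix m p ℝ}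
    (hX : HasEntrywiseDerivAt X X' t) (hY : HasEntrywiseDerivAt Y Y' t) :
    HasEntrywiseDerivAt (fun s => X s + Y s) (X' + Y') t :=
  fun i c => (hX i c).add (hY i c)

theorem HasEntrywiseDerivAt.mul {X : ℝ → Matrix m k ℝ} {Y : ℝ → Matrix k p ℝ}
    {X' : Matrix m k ℝ} {Y' : Matrix k p ℝ} (hX : HasEntrywiseDerivAt X X' t)
    (hY : HasEntrywiseDerivAt Y Y' t) :
    HasEntrywiseDerivAt (fun s => X s * Y s) (X' * Y t + X t * Y') t := fun i c => by
  simp only [mul_apply, Matrix.add_apply, ← Finset.sum_add_distrib]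
  exact HasDerivAt.fun_sum fun l _ => (hX i l).fun_mul (hY l c)

theorem HasEntrywiseDerivAt.mul_const [Fintype p] {q : Type*} {X : ℝ → Matrix m p ℝ}
    {X' : Matrix m p ℝ} (hX : HasEntrywiseDerivAt X X' t)
    (C : Matrix p q ℝ) : HasEntrywiseDerivAt (fun s => X s * C) (X' * C) t := fun i c => by
  simp only [mul_apply]
  exact HasDerivAt.fun_sum fun l _ => (hX i l).mul_const (C l c)

theorem HasEntrywiseDerivAt.const_mul [Fintype m] {q : Type*} [Fintype q]
    {X : ℝ → Matrix m p ℝ} {X' : Matrix m p ℝ} (hX : HasEntrywiseDerivAt X X' t)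
    (C : Matrix q m ℝ) :
    HasEntrywiseDerivAt (fun s => C * X s) (C * X') t := fun i c => by
  simp only [mul_apply]
  exact HasDerivAt.fun_sum fun l _ => (hX l c).const_mul (C i l)

end EntrywiseDeriv

variable {n : ℕ} {γ : ℝ} {P : Matrix (Fin n) (Fin n) ℝ} {r : Fin n → ℝ} {j : Fin n}

theorem valueV_eq_add_smul_mulVec (hP : RowStochastic P) (hγ0 : 0 ≤ γ) (hγ1 : γ < 1) :
    valueV γ P r = r + γ • P *ᵥ valueV γ P r := by
  have h : (1 - γ • P) *ᵥ valueV γ P r = r := by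
    rw [valueV, mulVec_mulVec, mul_nonsing_inv _ ((hP.isUnit_one_sub_smul hγ0 hγ1).map
      detMonoidHom), one_mulVec]
  rwa [sub_mulVec, one_mulVec, smul_mulVec, sub_eq_iff_eq_add] at h

theorem norm_valueV_le (hP : RowStochastic P) (hγ0 : 0 ≤ γ) (hγ1 : γ < 1) :
    ‖valueV γ P r‖ ≤ ‖r‖ / (1 - γ) := by
  have h : ‖valueV γ P r‖ ≤ ‖r‖ + γ * ‖valueV γ P r‖ := by
    conv_lhs => rw [valueV_eq_add_smul_mulVec hP hγ0 hγ1]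
    exact (norm_add_le _ _).trans (add_le_add_right (hP.norm_smul_mulVec_le_s19 hγ0 _) _)
  rw [le_div_iff₀ (sub_pos.2 hγ1)]
  linarith

theorem valueV_sub_tdW_succ (hP : RowStochastic P) (hγ0 : 0 ≤ γ) (hγ1 : γ < 1) (L : ℕ) :
    valueV γ P r - tdW γ P r (L + 1) = γ • P *ᵥ (valueV γ P r - tdW γ P r L) := by
  conv_lhs => rw [valueV_eq_add_smul_mulVec hP hγ0 hγ1]
  rw [tdW, mulVec_sub, smul_sub, add_sub_add_left_eq_sub]

theorem norm_valueV_sub_tdW_le (hP : RowStochastic P) (hγ0 : 0 ≤ γ) (hγ1 : γ < 1) (L : ℕ) :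
    ‖valueV γ P r - tdW γ P r L‖ ≤ γ ^ L * (‖r‖ / (1 - γ)) := by
  induction L with
  | zero => simpa [tdW] using norm_valueV_le hP hγ0 hγ1
  | succ L ih =>
    rw [valueV_sub_tdW_succ hP hγ0 hγ1, pow_succ', mul_assoc]
    exact (hP.norm_smul_mulVec_le_s19 hγ0 _).trans (mul_le_mul_of_nonneg_left ih hγ0)

theorem tdW_add_two_sub_tdW (l : ℕ) :
    tdW γ P r (l + 2) - tdW γ P r (l + 1) = γ • P *ᵥ (tdW γ P r (l + 1) - tdW γ P r l) := by
  show r + γ • P *ᵥ tdW γ P r (l + 1) - (r + γ • P *ᵥ tdW γ P r l) = _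
  rw [mulVec_sub, smul_sub, add_sub_add_left_eq_sub]

theorem attnLayer_fromRows (A : Matrix (TwoN n) (TwoN n) ℝ) (u : Matrix Unit (TwoN n) ℝ)
    (T : Matrix (TwoN n) (CIdx n) ℝ) (b : Matrix Unit (CIdx n) ℝ) :
    attnLayer n (Pmat n u) (Qmat n A) (fromRows T b)
      = fromRows T (b + (u * T + b) * maskM n * (Tᵀ * A * T)) := by
  simp only [attnLayer, Pmat, Qmat, fromBlocks_mul_fromRows, fromRows_mul, transpose_fromRows,
    fromCols_mul_fromBlocks, fromCols_mul_fromRows]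
  ext (i | i) c <;> simp

def promptTop (γ : ℝ) (P : Matrix (Fin n) (Fin n) ℝ) (j : Fin n) :
    Matrix (TwoN n) (CIdx n) ℝ :=
  fromCols (Xmat γ P) (replicateCol Unit (xqv j))

def promptBot (r : Fin n → ℝ) : Matrix Unit (CIdx n) ℝ :=
  replicateRow Unit (Sum.elim r 0)

theorem prompt_eq_fromRows : prompt γ P r j = fromRows (promptTop γ P j) (promptBot r) := by
  ext ((k | k) | _) (i | _) <;> rfl

def botRow (T : Matrix (TwoN n) (CIdx n) ℝ) (b₀ : Matrix Unit (CIdx n) ℝ)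
    (A : Matrix (TwoN n) (TwoN n) ℝ) (u : Matrix Unit (TwoN n) ℝ) :
    ℕ → Matrix Unit (CIdx n) ℝ
  | 0 => b₀
  | l + 1 => botRow T b₀ A u l + (u * T + botRow T b₀ A u l) * maskM n * (Tᵀ * A * T)

theorem embed_eq_fromRows (A : Matrix (TwoN n) (TwoN n) ℝ) (u : Matrix Unit (TwoN n) ℝ)
    (l : ℕ) :
    embed γ P r j A u l
      = fromRows (promptTop γ P j) (botRow (promptTop γ P j) (promptBot r) A u l) := by
  induction l with
  | zero => exact prompt_eq_fromRows
  | succ l ih => rw [embed, ih, attnLayer_fromRows, botRow]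

theorem tfOut_eq (A : Matrix (TwoN n) (TwoN n) ℝ) (u : Matrix Unit (TwoN n) ℝ) (L : ℕ) :
    tfOut γ P r j A u L = -botRow (promptTop γ P j) (promptBot r) A u L () (Sum.inr ()) := by
  rw [tfOut, embed_eq_fromRows, fromRows_apply_inr]

theorem mul_maskM_mul_apply {m : Type*} (x : Matrix m (CIdx n) ℝ)
    (S : Matrix (CIdx n) (CIdx n) ℝ) (k : m) (c : CIdx n) :
    (x * maskM n * S) k c = ∑ i, x k (Sum.inl i) * S (Sum.inl i) c := by
  simp [maskM, mul_apply, Fintype.sum_sum_type, one_apply]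

theorem gram_Atd_inl_inl (i i' : Fin n) :
    ((promptTop γ P j)ᵀ * Atd n * promptTop γ P j) (Sum.inl i) (Sum.inl i')
      = γ * P i' i - if i = i' then 1 else 0 := by
  simp [promptTop, Atd, Xmat, mul_apply, Fintype.sum_sum_type, one_apply]
  ring

theorem gram_Atd_inl_inr (i : Fin n) :
    ((promptTop γ P j)ᵀ * Atd n * promptTop γ P j) (Sum.inl i) (Sum.inr ())
      = -if i = j then 1 else 0 := by
  simp [promptTop, Atd, Xmat, xqv, mul_apply, Fintype.sum_sum_type, one_apply]

def tdStep (γ : ℝ) (P : Matrix (Fin n) (Fin n) ℝ) (j : Fin n) (x : Matrix Unit (CIdx n) ℝ) :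
    Matrix Unit (CIdx n) ℝ :=
  x + x * maskM n * ((promptTop γ P j)ᵀ * Atd n * promptTop γ P j)

theorem toCols₁_tdStep (x : Matrix Unit (CIdx n) ℝ) :
    (tdStep γ P j x).toCols₁ () = γ • P *ᵥ x.toCols₁ () := by
  ext i'
  simp [tdStep, mul_maskM_mul_apply, gram_Atd_inl_inl, mul_sub, Finset.sum_sub_distrib, mulVec,
    dotProduct, Finset.mul_sum]
  exact Finset.sum_congr rfl fun i _ => by ring

theorem tdStep_inr (x : Matrix Unit (CIdx n) ℝ) :
    tdStep γ P j x () (Sum.inr ()) = x () (Sum.inr ()) - x () (Sum.inl j) := by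
  simp [tdStep, mul_maskM_mul_apply, gram_Atd_inl_inr, sub_eq_add_neg]

theorem botRow_Atd_succ (b₀ : Matrix Unit (CIdx n) ℝ) (l : ℕ) :
    botRow (promptTop γ P j) b₀ (Atd n) 0 (l + 1)
      = tdStep γ P j (botRow (promptTop γ P j) b₀ (Atd n) 0 l) := by
  rw [botRow, Matrix.zero_mul, zero_add, tdStep]

theorem toCols₁_botRow_Atd (l : ℕ) :
    (botRow (promptTop γ P j) (promptBot r) (Atd n) 0 l).toCols₁ ()
      = tdW γ P r (l + 1) - tdW γ P r l := by
  induction l with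
  | zero => ext i; simp [botRow, promptBot, tdW]
  | succ l ih => rw [botRow_Atd_succ, toCols₁_tdStep, ih, tdW_add_two_sub_tdW]

theorem botRow_Atd_inr (l : ℕ) :
    botRow (promptTop γ P j) (promptBot r) (Atd n) 0 l () (Sum.inr ()) = -tdW γ P r l j := by
  induction l with
  | zero => simp [botRow, promptBot, tdW]
  | succ l ih =>
    have h := congrFun (toCols₁_botRow_Atd (γ := γ) (P := P) (r := r) (j := j) l) j
    simp only [toCols₁_apply, Pi.sub_apply] at h
    rw [botRow_Atd_succ, tdStep_inr, ih, h]
    ring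

theorem tfTD_eq_tdW (L : ℕ) : tfTD γ P r j L = tdW γ P r L j := by
  rw [tfTD, tfOut_eq, botRow_Atd_inr, neg_neg]

def botRowDeriv (T : Matrix (TwoN n) (CIdx n) ℝ) (b₀ : Matrix Unit (CIdx n) ℝ)
    (A E : Matrix (TwoN n) (TwoN n) ℝ) (u w : Matrix Unit (TwoN n) ℝ) :
    ℕ → Matrix Unit (CIdx n) ℝ
  | 0 => 0
  | l + 1 => botRowDeriv T b₀ A E u w l
      + (w * T + botRowDeriv T b₀ A E u w l) * maskM n * (Tᵀ * A * T)
      + (u * T + botRow T b₀ A u l) * maskM n * (Tᵀ * E * T)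

theorem hasEntrywiseDerivAt_botRow (T : Matrix (TwoN n) (CIdx n) ℝ)
    (b₀ : Matrix Unit (CIdx n) ℝ) (A E : Matrix (TwoN n) (TwoN n) ℝ)
    (u w : Matrix Unit (TwoN n) ℝ) (l : ℕ) :
    HasEntrywiseDerivAt (fun t => botRow T b₀ (A + t • E) (u + t • w) l)
      (botRowDeriv T b₀ A E u w l) 0 := by
  induction l with
  | zero => exact fun i c => by simpa [botRow, botRowDeriv] using hasDerivAt_const 0 (b₀ i c)
  | succ l ih =>
    have h := ih.add ((((hasEntrywiseDerivAt_add_smul u w 0).mul_const T).add ih).mul_const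
      (maskM n) |>.mul (((hasEntrywiseDerivAt_add_smul A E 0).const_mul Tᵀ).mul_const T))
    simpa [botRow, botRowDeriv, add_assoc] using h

theorem hasDerivAt_tfOut (A E : Matrix (TwoN n) (TwoN n) ℝ) (u w : Matrix Unit (TwoN n) ℝ)
    (L : ℕ) :
    HasDerivAt (fun t : ℝ => tfOut γ P r j (A + t • E) (u + t • w) L)
      (-botRowDeriv (promptTop γ P j) (promptBot r) A E u w L () (Sum.inr ())) 0 := by
  simp only [tfOut_eq]
  exact (hasEntrywiseDerivAt_botRow _ _ A E u w L () (Sum.inr ())).fun_neg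

theorem gvec_inl (L : ℕ) (ab : TwoN n × TwoN n) :
    gvec γ P r L j (Sum.inl ab) = -botRowDeriv (promptTop γ P j) (promptBot r) (Atd n)
      (single ab.1 ab.2 1) 0 0 L () (Sum.inr ()) := by
  rw [gvec]
  simpa only [smul_zero, add_zero] using
    (hasDerivAt_tfOut (γ := γ) (P := P) (r := r) (j := j) (Atd n) (single ab.1 ab.2 1) 0 0 L).deriv

theorem gvec_inr (L : ℕ) (k : TwoN n) :
    gvec γ P r L j (Sum.inr k) = -botRowDeriv (promptTop γ P j) (promptBot r) (Atd n)
      0 0 (single () k 1) L () (Sum.inr ()) := by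
  rw [gvec]
  simpa only [smul_zero, add_zero, zero_add] using
    (hasDerivAt_tfOut (γ := γ) (P := P) (r := r) (j := j) (Atd n) 0 0 (single () k 1) L).deriv

theorem abs_promptTop_le (hP : RowStochastic P) (hγ0 : 0 ≤ γ) (hγ1 : γ ≤ 1)
    (p : TwoN n) (c : CIdx n) : |promptTop γ P j p c| ≤ 1 := by
  rcases p with k | k <;> rcases c with i | _
  · simp [promptTop, Xmat]; split_ifs <;> simp
  · simp [promptTop, xqv]; split_ifs <;> simp
  · simp only [promptTop, fromCols_apply_inl, Xmat]
    rw [abs_mul, abs_of_nonneg hγ0, abs_of_nonneg (hP.1 i k)]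
    exact mul_le_one₀ hγ1 (hP.1 i k) (hP.le_one i k)
  · simp [promptTop, xqv]

theorem abs_mul_maskM_mul_apply_le (x : Matrix Unit (CIdx n) ℝ)
    {S : Matrix (CIdx n) (CIdx n) ℝ} {s : ℝ} (hS : ∀ i c, |S (Sum.inl i) c| ≤ s) (c : CIdx n) :
    |(x * maskM n * S) () c| ≤ n * (‖x.toCols₁ ()‖ * s) := by
  rw [mul_maskM_mul_apply]
  refine (Finset.abs_sum_le_sum_abs _ _).trans ?_
  calc ∑ i, |x () (Sum.inl i) * S (Sum.inl i) c| ≤ ∑ _i : Fin n, ‖x.toCols₁ ()‖ * s :=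
        Finset.sum_le_sum fun i _ => by
          rw [abs_mul]
          exact mul_le_mul (norm_le_pi_norm (x.toCols₁ ()) i) (hS i c) (abs_nonneg _)
            (norm_nonneg _)
    _ = n * (‖x.toCols₁ ()‖ * s) := by simp

theorem abs_gram_Atd_le (hP : RowStochastic P) (hγ0 : 0 ≤ γ) (hγ1 : γ ≤ 1)
    (i : Fin n) (c : CIdx n) :
    |((promptTop γ P j)ᵀ * Atd n * promptTop γ P j) (Sum.inl i) c| ≤ 2 := by
  rcases c with i' | _
  · rw [gram_Atd_inl_inl]
    have hγP : |γ * P i' i| ≤ 1 := by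
      rw [abs_mul, abs_of_nonneg hγ0, abs_of_nonneg (hP.1 i' i)]
      exact mul_le_one₀ hγ1 (hP.1 i' i) (hP.le_one i' i)
    calc |γ * P i' i - if i = i' then 1 else 0| ≤ 1 + 1 :=
          (abs_sub _ _).trans (add_le_add hγP (by split_ifs <;> norm_num))
      _ = 2 := by norm_num
  · rw [gram_Atd_inl_inr]; split_ifs <;> norm_num

theorem abs_gram_single_le (hP : RowStochastic P) (hγ0 : 0 ≤ γ) (hγ1 : γ ≤ 1)
    (a b : TwoN n) (c c' : CIdx n) :
    |((promptTop γ P j)ᵀ * single a b (1 : ℝ) * promptTop γ P j) c c'| ≤ 1 := by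
  have h : ((promptTop γ P j)ᵀ * single a b (1 : ℝ) * promptTop γ P j) c c'
      = promptTop γ P j a c * promptTop γ P j b c' := by
    simp [mul_apply, single_apply, ite_and, Finset.sum_ite_eq, -Fintype.sum_sum_type]
  rw [h, abs_mul]
  exact mul_le_one₀ (abs_promptTop_le hP hγ0 hγ1 a c) (abs_nonneg _)
    (abs_promptTop_le hP hγ0 hγ1 b c')

theorem norm_toCols₁_single_mul_le (hP : RowStochastic P) (hγ0 : 0 ≤ γ) (hγ1 : γ ≤ 1)
    (k : TwoN n) : ‖(single () k (1 : ℝ) * promptTop γ P j).toCols₁ ()‖ ≤ 1 := by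
  refine (pi_norm_le_iff_of_nonneg zero_le_one).2 fun i => ?_
  simpa [mul_apply, single_apply] using abs_promptTop_le hP hγ0 hγ1 k (Sum.inl i) (j := j)

theorem norm_toCols₁_botRow_Atd_le (hP : RowStochastic P) (hγ0 : 0 ≤ γ) (hγ1 : γ ≤ 1)
    (l : ℕ) : ‖(botRow (promptTop γ P j) (promptBot r) (Atd n) 0 l).toCols₁ ()‖ ≤ ‖r‖ := by
  induction l with
  | zero => exact le_of_eq (congrArg norm (by ext i; simp [botRow, promptBot]))
  | succ l ih =>
    rw [botRow_Atd_succ, toCols₁_tdStep]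
    refine (hP.norm_smul_mulVec_le_s19 hγ0 _).trans ?_
    nlinarith [norm_nonneg ((botRow (promptTop γ P j) (promptBot r) (Atd n) 0 l).toCols₁ ())]

section ForcedTDStep

variable {z f : ℕ → Matrix Unit (CIdx n) ℝ} {c : ℝ}

theorem norm_toCols₁_le_of_eq_tdStep_add (hP : RowStochastic P) (hγ0 : 0 ≤ γ) (hγ1 : γ < 1)
    (hz0 : z 0 = 0) (hz : ∀ l, z (l + 1) = tdStep γ P j (z l) + f l)
    (hf : ∀ l c', |f l () c'| ≤ c) (l : ℕ) : ‖(z l).toCols₁ ()‖ ≤ c / (1 - γ) := by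
  have hc : 0 ≤ c := (abs_nonneg _).trans (hf 0 (Sum.inr ()))
  have hγ : 0 < 1 - γ := sub_pos.2 hγ1
  induction l with
  | zero =>
    rw [hz0, show (0 : Matrix Unit (CIdx n) ℝ).toCols₁ () = 0 from rfl, norm_zero]
    exact div_nonneg hc hγ.le
  | succ l ih =>
    have hstep : (z (l + 1)).toCols₁ () = γ • P *ᵥ (z l).toCols₁ () + (f l).toCols₁ () := by
      rw [hz, ← toCols₁_tdStep]; rfl
    have hfl : ‖(f l).toCols₁ ()‖ ≤ c :=
      (pi_norm_le_iff_of_nonneg hc).2 fun i => hf l (Sum.inl i)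
    rw [hstep]
    calc _ ≤ γ * (c / (1 - γ)) + c := (norm_add_le _ _).trans
          (add_le_add ((hP.norm_smul_mulVec_le_s19 hγ0 _).trans (mul_le_mul_of_nonneg_left ih hγ0))
            hfl)
      _ = c / (1 - γ) := by field_simp; ring

theorem abs_inr_le_of_eq_tdStep_add (hP : RowStochastic P) (hγ0 : 0 ≤ γ) (hγ1 : γ < 1)
    (hz0 : z 0 = 0) (hz : ∀ l, z (l + 1) = tdStep γ P j (z l) + f l)
    (hf : ∀ l c', |f l () c'| ≤ c) (l : ℕ) :
    |z l () (Sum.inr ())| ≤ l * (c / (1 - γ) + c) := by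
  induction l with
  | zero => simp [hz0]
  | succ l ih =>
    have hstep : z (l + 1) () (Sum.inr ())
        = z l () (Sum.inr ()) - (z l).toCols₁ () j + f l () (Sum.inr ()) := by
      rw [hz, Matrix.add_apply, tdStep_inr]; rfl
    have hj : |(z l).toCols₁ () j| ≤ c / (1 - γ) :=
      (norm_le_pi_norm _ j).trans (norm_toCols₁_le_of_eq_tdStep_add hP hγ0 hγ1 hz0 hz hf l)
    rw [hstep]
    calc _ ≤ |z l () (Sum.inr ())| + |(z l).toCols₁ () j| + |f l () (Sum.inr ())| :=
          (abs_add_le _ _).trans (add_le_add_left (abs_sub _ _) _)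
      _ ≤ l * (c / (1 - γ) + c) + c / (1 - γ) + c := by gcongr; exact hf l _
      _ = (l + 1 : ℕ) * (c / (1 - γ) + c) := by push_cast; ring

end ForcedTDStep

theorem abs_botRowDeriv_Atd_le (hP : RowStochastic P) (hγ0 : 0 ≤ γ) (hγ1 : γ < 1)
    {E : Matrix (TwoN n) (TwoN n) ℝ} {w : Matrix Unit (TwoN n) ℝ}
    (hw : ‖(w * promptTop γ P j).toCols₁ ()‖ ≤ 1)
    (hE : ∀ i c, |((promptTop γ P j)ᵀ * E * promptTop γ P j) (Sum.inl i) c| ≤ 1) (L : ℕ) :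
    |botRowDeriv (promptTop γ P j) (promptBot r) (Atd n) E 0 w L () (Sum.inr ())|
      ≤ L * (n * (2 + ‖r‖) / (1 - γ) + n * (2 + ‖r‖)) := by
  set T := promptTop γ P j
  refine abs_inr_le_of_eq_tdStep_add (j := j) hP hγ0 hγ1 rfl (fun l => ?_) (fun l c => ?_) L
    (f := fun l => w * T * maskM n * (Tᵀ * Atd n * T)
      + botRow T (promptBot r) (Atd n) 0 l * maskM n * (Tᵀ * E * T))
  · rw [botRowDeriv, tdStep, Matrix.add_mul, Matrix.add_mul, Matrix.zero_mul, zero_add]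
    abel
  · calc _ ≤ n * (1 * 2) + n * (‖r‖ * 1) := (abs_add_le _ _).trans (add_le_add
          ((abs_mul_maskM_mul_apply_le _ (abs_gram_Atd_le hP hγ0 hγ1.le) c).trans
            (by gcongr))
          ((abs_mul_maskM_mul_apply_le _ hE c).trans
            (by gcongr; exact norm_toCols₁_botRow_Atd_le hP hγ0 hγ1.le l)))
      _ = n * (2 + ‖r‖) := by ring

theorem abs_gvec_le (hP : RowStochastic P) (hγ0 : 0 ≤ γ) (hγ1 : γ < 1) (L : ℕ)
    (idx : (TwoN n × TwoN n) ⊕ TwoN n) :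
    |gvec γ P r L j idx| ≤ L * (n * (2 + ‖r‖) / (1 - γ) + n * (2 + ‖r‖)) := by
  rcases idx with ⟨a, b⟩ | k
  · rw [gvec_inl, abs_neg]
    refine abs_botRowDeriv_Atd_le hP hγ0 hγ1 ?_
      (fun i c => abs_gram_single_le hP hγ0 hγ1.le a b _ c) L
    simp [Matrix.zero_mul, show (0 : Matrix Unit (CIdx n) ℝ).toCols₁ () = 0 from rfl]
  · rw [gvec_inr, abs_neg]
    exact abs_botRowDeriv_Atd_le hP hγ0 hγ1 (norm_toCols₁_single_mul_le hP hγ0 hγ1.le k)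
      (fun i c => by simp) L

theorem norm_mcUpdate_le {R : ℝ} {ρ : Fin n → ℝ} (hP : RowStochastic P) (hγ0 : 0 ≤ γ)
    (hγ1 : γ < 1) (hr : ‖r‖ ≤ R) (hρ0 : ∀ ω, 0 ≤ ρ ω) (hρ1 : ∑ ω, ρ ω = 1) (L : ℕ) :
    ‖∑ ω, (ρ ω * (valueV γ P r ω - tfTD γ P r ω L)) • gvec γ P r L ω‖
      ≤ R / (1 - γ) * (n * (2 + R) / (1 - γ) + n * (2 + R)) * (L * γ ^ L) := by
  have hγ : 0 < 1 - γ := sub_pos.2 hγ1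
  have hR : 0 ≤ R := (norm_nonneg r).trans hr
  set G := (L : ℝ) * (n * (2 + ‖r‖) / (1 - γ) + n * (2 + ‖r‖))
  have hG : 0 ≤ G := by positivity
  have herr (ω : Fin n) : |valueV γ P r ω - tfTD γ P r ω L| ≤ γ ^ L * (‖r‖ / (1 - γ)) := by
    rw [tfTD_eq_tdW, ← Pi.sub_apply, ← Real.norm_eq_abs]
    exact (norm_le_pi_norm _ ω).trans (norm_valueV_sub_tdW_le hP hγ0 hγ1 L)
  have hgrad (ω : Fin n) : ‖gvec γ P r L ω‖ ≤ G :=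
    (pi_norm_le_iff_of_nonneg hG).2 fun idx => abs_gvec_le hP hγ0 hγ1 L idx
  calc _ ≤ ∑ ω, ρ ω * (γ ^ L * (‖r‖ / (1 - γ)) * G) := by
        refine (norm_sum_le _ _).trans (Finset.sum_le_sum fun ω _ => ?_)
        rw [norm_smul, Real.norm_eq_abs, abs_mul, abs_of_nonneg (hρ0 ω), mul_assoc]
        exact mul_le_mul_of_nonneg_left
          (mul_le_mul (herr ω) (hgrad ω) (norm_nonneg _) (by positivity)) (hρ0 ω)
    _ = ‖r‖ / (1 - γ) * (n * (2 + ‖r‖) / (1 - γ) + n * (2 + ‖r‖)) * (L * γ ^ L) := by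
        rw [← Finset.sum_mul, hρ1]; ring
    _ ≤ R / (1 - γ) * (n * (2 + R) / (1 - γ) + n * (2 + R)) * (L * γ ^ L) := by gcongr

end LoopedTD

theorem stmt19_general (n : ℕ) (γ : ℝ) (hγ0 : 0 ≤ γ) (hγ1 : γ < 1)
    (R : ℝ)
    (μ : MeasureTheory.Measure (Matrix (Fin n) (Fin n) ℝ × (Fin n → ℝ)))
    [MeasureTheory.IsProbabilityMeasure μ]
    (ρ : Matrix (Fin n) (Fin n) ℝ → (Fin n → ℝ))
    (hae : ∀ᵐ pr ∂μ, RowStochastic pr.1 ∧ ‖pr.2‖ ≤ R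
      ∧ (∀ ω, 0 ≤ ρ pr.1 ω) ∧ (∑ ω, ρ pr.1 ω) = 1
      ∧ pr.1ᵀ.mulVec (ρ pr.1) = ρ pr.1) :
    Tendsto (fun L : ℕ => ∑ idx : (TwoN n × TwoN n) ⊕ TwoN n,
        |(∫ pr, (∑ ω, (ρ pr.1 ω *
              (valueV γ pr.1 pr.2 ω - tfTD γ pr.1 pr.2 ω L)) •
            gvec γ pr.1 pr.2 L ω) ∂μ) idx|)
      atTop (𝓝 0) := by
  set K := R / (1 - γ) * (n * (2 + R) / (1 - γ) + n * (2 + R))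
  have hbound (L : ℕ) : ‖∫ pr, (∑ ω, (ρ pr.1 ω * (valueV γ pr.1 pr.2 ω
      - tfTD γ pr.1 pr.2 ω L)) • gvec γ pr.1 pr.2 L ω) ∂μ‖ ≤ K * (L * γ ^ L) := by
    refine (MeasureTheory.norm_integral_le_of_norm_le_const
      (C := K * (L * γ ^ L)) ?_).trans (by simp)
    filter_upwards [hae] with pr ⟨hP, hr, hρ0, hρ1, _⟩
    exact LoopedTD.norm_mcUpdate_le hP hγ0 hγ1 hr hρ0 hρ1 L
  have hlim : Tendsto (fun L : ℕ => K * (L * γ ^ L)) atTop (𝓝 0) := by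
    simpa using (tendsto_self_mul_const_pow_of_lt_one hγ0 hγ1).const_mul K
  rw [← Finset.sum_const_zero (s := (Finset.univ : Finset ((TwoN n × TwoN n) ⊕ TwoN n)))]
  refine tendsto_finsetSum _ fun idx _ =>
    squeeze_zero (fun L => abs_nonneg _) (fun L => ?_) hlim
  exact (norm_le_pi_norm _ idx).trans (hbound L)

/-- Corollary 1: the ℓ1 norm of the expected multi-task Monte Carlo
update of the looped transformer evaluated at the TD parameters tends to 0 as L → ∞. -/
theorem stmt19 (n : ℕ) (hn : 1 ≤ n) (γ : ℝ) (hγ0 : 0 ≤ γ) (hγ1 : γ < 1)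
    (R : ℝ) (hR : 0 < R)
    (μ : MeasureTheory.Measure (Matrix (Fin n) (Fin n) ℝ × (Fin n → ℝ)))
    [MeasureTheory.IsProbabilityMeasure μ]
    (ρ : Matrix (Fin n) (Fin n) ℝ → (Fin n → ℝ)) (hρmeas : Measurable ρ)
    (hae : ∀ᵐ pr ∂μ, RowStochastic pr.1 ∧ ‖pr.2‖ ≤ R
      ∧ (∀ ω, 0 ≤ ρ pr.1 ω) ∧ (∑ ω, ρ pr.1 ω) = 1
      ∧ pr.1ᵀ.mulVec (ρ pr.1) = ρ pr.1) :
    Tendsto (fun L : ℕ => ∑ idx : (TwoN n × TwoN n) ⊕ TwoN n,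
        |(∫ pr, (∑ ω, (ρ pr.1 ω *
              (valueV γ pr.1 pr.2 ω - tfTD γ pr.1 pr.2 ω L)) •
            gvec γ pr.1 pr.2 L ω) ∂μ) idx|)
      atTop (𝓝 0) :=
  stmt19_general n γ hγ0 hγ1 R μ ρ hae
end
end
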